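/- For every n ≥ 1, the following identity holds in 𝓕₂*: Σ_{I' ∈ C((2^0, 2^1, …, 2^{n−1}))} S_{I'} = Σ_{α} Π_{k=1}^{l(α)} S_{(2^{σ(k)+α(k)−1}, 2^{σ(k)+α(k)−2}, …, 2^{σ(k)})}, where α = (α(1),…,α(l(α))) runs over all compositions of n (finite sequences of positive integers summing to n) and σ(k) = α(1) + ⋯ + α(k−1). (This is Milnor's conjugation formula χ(ξ_n) = Σ_α Π_k ξ_{α(k)}^{2^{σ(k)}} read in the mod 2 dual Leibniz–Hopf algebra.) -/

import Mathlib

/-- The overlapping shuffle product of two finite sequences, as a multiset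
(counting multiplicities). -/
def osp : List ℕ → List ℕ → Multiset (List ℕ)
  | A, [] => {A}
  | [], B => {B}
  | a :: A, b :: B =>
      ((osp A (b :: B)).map (a :: ·)) +
      ((osp (a :: A) B).map (b :: ·)) +
      ((osp A B).map ((a + b) :: ·))
termination_by A B => A.length + B.length
decreasing_by all_goals (simp only [List.length_cons]; omega)

/-- The underlying free module over `ZMod 2` on the set of finite sequences
(this carries the mod 2 dual Leibniz--Hopf algebra `𝓕₂*`). -/
abbrev F2D : Type := (List ℕ) →₀ ZMod 2

/-- The basis element `S_I`. -/
noncomputable def sElem (I : List ℕ) : F2D := Finsupp.single I 1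

/-- The element of `𝓕₂*` associated to a multiset of sequences, keeping
multiplicities mod 2. -/
noncomputable def ofMS (m : Multiset (List ℕ)) : F2D := (m.map sElem).sum

/-- The bilinear product of `𝓕₂*`: on basis elements,
`S_I · S_J = Σ_K (multiplicity of K in osp I J mod 2) • S_K`. -/
noncomputable def fmul (x y : F2D) : F2D :=
  x.sum fun I a => y.sum fun J b => (a * b) • ofMS (osp I J)

/-- The coarsening set `C(I)`: all sequences obtained from `I` by summing
consecutive blocks of entries.  (`C([]) = {[]}` by convention.) -/
def coars : List ℕ → Finset (List ℕ)
  | [] => {[]}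
  | [i] => {[i]}
  | i :: j :: rest =>
      ((coars (j :: rest)).image (i :: ·)) ∪
      ((coars (j :: rest)).image (fun I' => (i + I'.headD 0) :: I'.tail))

/-- The set of compositions of `n`: finite sequences of positive integers with
sum `n`. -/
def comps : ℕ → Finset (List ℕ)
  | 0 => {([] : List ℕ)}
  | n + 1 =>
      (Finset.range (n + 1)).attach.biUnion fun k =>
        (comps k.1).image fun α => (n + 1 - k.1) :: α
termination_by n => n
decreasing_by
  have h := Finset.mem_range.mp k.2
  omega

/-- The sequence `(2^{s+a−1}, 2^{s+a−2}, …, 2^s)`. -/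
def xiSeq (s a : ℕ) : List ℕ := ((List.range a).map fun i => 2 ^ (s + i)).reverse

/-- `milnorProd s (α(1),…,α(l)) = Π_{k=1}^{l} S_{(2^{σ(k)+α(k)−1},…,2^{σ(k)})}`
in `𝓕₂*`, where `σ(k) = s + α(1) + ⋯ + α(k−1)`. -/
noncomputable def milnorProd : ℕ → List ℕ → F2D
  | _, [] => sElem []
  | s, a :: rest => fmul (sElem (xiSeq s a)) (milnorProd (s + a) rest)

/-!
For a nonempty word `u = (u₁, …, uₙ)` of positive integers,
`Σ_{k=0}^{n} S_{(u_k, …, u₁)} · Σ_{J ∈ C(u_{k+1}, …, uₙ)} S_J = 0` mod 2. Indeed, split each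
overlapping shuffle according to which factor supplies its first letter: the terms at stage `k`
whose first letter is the first block of `J` are exactly the terms at stage `k + 1` whose first
letter involves `u_{k+1}`, so everything cancels in pairs. For `u = (2^s, …, 2^{s+n-1})` the
identity expresses the coarsening sum through the coarsening sums of the suffixes of `u`; this is
the recursion that Milnor's sum over compositions satisfies by splitting off the first part.
-/

open Finset

theorem osp_nil_right (A : List ℕ) : osp A [] = {A} := by
  cases A <;> rw [osp]

theorem osp_nil_left (B : List ℕ) : osp [] B = {B} := by
  cases B with
  | nil => rw [osp]
  | cons b B => rw [osp]; exact fun h => nomatch h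

theorem osp_cons_cons (a b : ℕ) (A B : List ℕ) :
    osp (a :: A) (b :: B) =
      (osp A (b :: B)).map (a :: ·) + (osp (a :: A) B).map (b :: ·) +
        (osp A B).map ((a + b) :: ·) := by
  rw [osp]

/-- The terms of `osp (x :: A) J` whose first letter involves `x`; `ospRight (x :: A) J` holds
those whose first letter is the first letter of `J`. -/
def ospLeft (x : ℕ) (A : List ℕ) : List ℕ → Multiset (List ℕ)
  | [] => {x :: A}
  | j :: J => (osp A (j :: J)).map (x :: ·) + (osp A J).map ((x + j) :: ·)

def ospRight (A : List ℕ) : List ℕ → Multiset (List ℕ)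
  | [] => 0
  | j :: J => (osp A J).map (j :: ·)

theorem osp_cons_left (x : ℕ) (A J : List ℕ) :
    osp (x :: A) J = ospLeft x A J + ospRight (x :: A) J := by
  cases J with
  | nil => simp [osp_nil_right, ospLeft, ospRight]
  | cons j J => rw [osp_cons_cons, ospLeft, ospRight]; abel

theorem osp_nil_left_eq_ospRight {J : List ℕ} (hJ : J ≠ []) : osp [] J = ospRight [] J := by
  obtain ⟨j, J, rfl⟩ := List.exists_cons_of_ne_nil hJ
  simp [osp_nil_left, ospRight]

theorem coars_cons_of_ne_nil (x : ℕ) {L : List ℕ} (hL : L ≠ []) :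
    coars (x :: L) = (coars L).image (x :: ·) ∪
      (coars L).image fun I => (x + I.headD 0) :: I.tail := by
  obtain ⟨j, L, rfl⟩ := List.exists_cons_of_ne_nil hL
  rfl

theorem headD_le_headD_of_mem_coars {L I : List ℕ} (hI : I ∈ coars L) :
    L.headD 0 ≤ I.headD 0 := by
  match L, hI with
  | [], hI => simp_all [coars]
  | [i], hI => simp_all [coars]
  | i :: j :: L, hI =>
    rw [coars_cons_of_ne_nil i (List.cons_ne_nil j L)] at hI
    simp only [mem_union, mem_image] at hI
    rcases hI with ⟨I, -, rfl⟩ | ⟨I, -, rfl⟩ <;> simp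

theorem ne_nil_of_headD_pos {L : List ℕ} (hL : 0 < L.headD 0) : L ≠ [] := by
  rintro rfl
  exact lt_irrefl 0 hL

theorem headD_cons_tail_of_headD_pos {L : List ℕ} (hL : 0 < L.headD 0) :
    L.headD 0 :: L.tail = L := by
  obtain ⟨j, L, rfl⟩ := List.exists_cons_of_ne_nil (ne_nil_of_headD_pos hL)
  rfl

theorem sum_coars_cons {M : Type*} [AddCommMonoid M] (x : ℕ) {L : List ℕ} (hL : 0 < L.headD 0)
    (f : List ℕ → M) :
    ∑ J ∈ coars (x :: L), f J = ∑ I ∈ coars L, (f (x :: I) + f ((x + I.headD 0) :: I.tail)) := by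
  have hpos : ∀ I ∈ coars L, 0 < I.headD 0 := fun I hI =>
    hL.trans_le (headD_le_headD_of_mem_coars hI)
  have hdisj : Disjoint ((coars L).image (x :: ·))
      ((coars L).image fun I => (x + I.headD 0) :: I.tail) := by
    simp only [disjoint_left, mem_image, not_exists, not_and]
    rintro _ ⟨I, -, rfl⟩ I' hI' h
    have hhead := (List.cons_eq_cons.mp h).1
    have hI'pos := hpos I' hI'
    omega
  have hinj : Set.InjOn (fun I : List ℕ => (x + I.headD 0) :: I.tail) (coars L) :=
    fun I hI I' hI' h => by
      obtain ⟨hhead, htail⟩ := List.cons_eq_cons.mp h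
      rw [← headD_cons_tail_of_headD_pos (hpos I hI),
        ← headD_cons_tail_of_headD_pos (hpos I' hI'), Nat.add_left_cancel hhead, htail]
  rw [coars_cons_of_ne_nil x (ne_nil_of_headD_pos hL), sum_union hdisj,
    sum_image (fun _ _ _ _ h => List.cons_injective h), sum_image hinj,
    sum_add_distrib]

theorem sum_coars_cons_ospRight (x : ℕ) (A : List ℕ) {L : List ℕ} (hL : ∀ y ∈ L, 0 < y) :
    ∑ J ∈ coars (x :: L), ospRight A J = ∑ I ∈ coars L, ospLeft x A I := by
  cases L with
  | nil => simp [coars, ospRight, ospLeft, osp_nil_right]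
  | cons y L =>
    have hy : 0 < (y :: L).headD 0 := hL y List.mem_cons_self
    rw [sum_coars_cons x hy]
    refine sum_congr rfl fun I hI => ?_
    obtain ⟨j, I, rfl⟩ := List.exists_cons_of_ne_nil
      (ne_nil_of_headD_pos (hy.trans_le (headD_le_headD_of_mem_coars hI)))
    simp [ospRight, ospLeft]

theorem even_sum_range_succ_of_telescope {M : Type*} [AddCommMonoid M] {n : ℕ} {T R X : ℕ → M}
    (h0 : T 0 = R 0) (hsucc : ∀ k < n, T (k + 1) = X k + R (k + 1))
    (hshift : ∀ k < n, R k = X k) (hlast : R n = 0) :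
    Even (∑ k ∈ range (n + 1), T k) := by
  refine ⟨∑ k ∈ range n, X k, ?_⟩
  calc ∑ k ∈ range (n + 1), T k = ∑ k ∈ range n, T (k + 1) + T 0 := sum_range_succ' _ _
    _ = ∑ k ∈ range n, X k + (∑ k ∈ range n, R (k + 1) + R 0) := by
      rw [sum_congr rfl fun k hk => hsucc k (mem_range.mp hk), sum_add_distrib, h0, add_assoc]
    _ = ∑ k ∈ range n, X k + (∑ k ∈ range n, R k + R n) := by
      rw [← sum_range_succ', sum_range_succ]
    _ = ∑ k ∈ range n, X k + ∑ k ∈ range n, X k := by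
      rw [hlast, add_zero, sum_congr rfl fun k hk => hshift k (mem_range.mp hk)]

theorem even_sum_osp_reverse_take_coars_drop {u : List ℕ} (hu : u ≠ []) (hpos : ∀ y ∈ u, 0 < y) :
    Even (∑ k ∈ range (u.length + 1),
      ∑ J ∈ coars (u.drop k), osp (u.take k).reverse J) := by
  have hdrop : ∀ k < u.length, u.drop k = u.getD k 0 :: u.drop (k + 1) := fun k hk => by
    rw [List.drop_eq_getElem_cons hk, List.getD_eq_getElem _ _ hk]
  have htake : ∀ k < u.length, (u.take (k + 1)).reverse = u.getD k 0 :: (u.take k).reverse :=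
    fun k hk => by
      rw [List.take_add_one, List.getElem?_eq_getElem hk, List.getD_eq_getElem _ _ hk]
      simp
  apply even_sum_range_succ_of_telescope
    (R := fun k => ∑ J ∈ coars (u.drop k), ospRight (u.take k).reverse J)
    (X := fun k => ∑ J ∈ coars (u.drop (k + 1)), ospLeft (u.getD k 0) (u.take k).reverse J)
  · have hu0 : 0 < u.headD 0 := by
      obtain ⟨y, u, rfl⟩ := List.exists_cons_of_ne_nil hu
      exact hpos y List.mem_cons_self
    refine sum_congr rfl fun J hJ => osp_nil_left_eq_ospRight (ne_nil_of_headD_pos ?_)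
    exact hu0.trans_le (headD_le_headD_of_mem_coars hJ)
  · intro k hk
    simp only [htake k hk, osp_cons_left, sum_add_distrib]
  · intro k hk
    rw [hdrop k hk]
    exact sum_coars_cons_ospRight _ _ fun y hy => hpos y (List.mem_of_mem_drop hy)
  · simp [coars, ospRight]

theorem ofMS_add (m₁ m₂ : Multiset (List ℕ)) : ofMS (m₁ + m₂) = ofMS m₁ + ofMS m₂ := by
  simp [ofMS]

theorem ofMS_singleton (J : List ℕ) : ofMS {J} = sElem J := by
  simp [ofMS]

theorem ofMS_sum {ι : Type*} (s : Finset ι) (m : ι → Multiset (List ℕ)) :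
    ofMS (∑ i ∈ s, m i) = ∑ i ∈ s, ofMS (m i) :=
  map_sum (AddMonoidHom.mk' ofMS ofMS_add) m s

theorem ofMS_eq_zero_of_even {m : Multiset (List ℕ)} (hm : Even m) : ofMS m = 0 := by
  obtain ⟨r, rfl⟩ := hm
  rw [ofMS_add, ZModModule.add_self]

theorem fmul_sElem_sElem (I J : List ℕ) : fmul (sElem I) (sElem J) = ofMS (osp I J) := by
  simp [fmul, sElem]

theorem fmul_add (x y z : F2D) : fmul x (y + z) = fmul x y + fmul x z := by
  rw [fmul, fmul, fmul, ← Finsupp.sum_add]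
  refine Finsupp.sum_congr fun I _ => ?_
  exact Finsupp.sum_add_index' (fun J => by rw [mul_zero, zero_smul])
    (fun J b₁ b₂ => by rw [mul_add, add_smul])

theorem fmul_sum {ι : Type*} (x : F2D) (s : Finset ι) (y : ι → F2D) :
    fmul x (∑ i ∈ s, y i) = ∑ i ∈ s, fmul x (y i) :=
  map_sum (AddMonoidHom.mk' (fmul x) (fmul_add x)) y s

noncomputable def coarsSum (L : List ℕ) : F2D := ∑ I ∈ coars L, sElem I

theorem fmul_sElem_coarsSum (A L : List ℕ) :
    fmul (sElem A) (coarsSum L) = ofMS (∑ J ∈ coars L, osp A J) := by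
  simp only [coarsSum, fmul_sum, fmul_sElem_sElem, ofMS_sum]

theorem fmul_sElem_nil_coarsSum (L : List ℕ) : fmul (sElem []) (coarsSum L) = coarsSum L := by
  rw [fmul_sElem_coarsSum]
  simp only [osp_nil_left, ofMS_sum, ofMS_singleton, coarsSum]

theorem coarsSum_eq_sum_fmul {u : List ℕ} (hu : u ≠ []) (hpos : ∀ y ∈ u, 0 < y) :
    coarsSum u = ∑ k ∈ range u.length,
      fmul (sElem (u.take (k + 1)).reverse) (coarsSum (u.drop (k + 1))) := by
  have h := ofMS_eq_zero_of_even (even_sum_osp_reverse_take_coars_drop hu hpos)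
  rw [ofMS_sum] at h
  simp only [← fmul_sElem_coarsSum] at h
  rw [sum_range_succ', List.take_zero, List.reverse_nil, List.drop_zero,
    fmul_sElem_nil_coarsSum, add_eq_zero_iff_eq_neg, ZModModule.neg_eq_self] at h
  exact h.symm

def powSeq (s n : ℕ) : List ℕ := (List.range n).map fun i => 2 ^ (s + i)

theorem reverse_take_powSeq (s : ℕ) {k n : ℕ} (hk : k ≤ n) :
    ((powSeq s n).take k).reverse = xiSeq s k := by
  rw [powSeq, xiSeq, ← List.map_take, List.take_range, min_eq_left hk]

theorem drop_powSeq (s : ℕ) {k n : ℕ} (hk : k ≤ n) :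
    (powSeq s n).drop k = powSeq (s + k) (n - k) := by
  obtain ⟨m, rfl⟩ := Nat.exists_eq_add_of_le hk
  rw [powSeq, powSeq, List.range_add, List.map_append, List.drop_left' (by simp), List.map_map,
    Nat.add_sub_cancel_left]
  simp only [Function.comp_def, add_assoc]

theorem coarsSum_powSeq_eq_sum_fmul (s : ℕ) {n : ℕ} (hn : 0 < n) :
    coarsSum (powSeq s n) = ∑ k ∈ range n,
      fmul (sElem (xiSeq s (k + 1))) (coarsSum (powSeq (s + (k + 1)) (n - (k + 1)))) := by
  have hlen : (powSeq s n).length = n := by simp [powSeq]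
  rw [coarsSum_eq_sum_fmul, hlen]
  · refine sum_congr rfl fun k hk => ?_
    have hk : k + 1 ≤ n := mem_range.mp hk
    rw [reverse_take_powSeq s hk, drop_powSeq s hk]
  · exact List.ne_nil_of_length_pos (by omega)
  · simp [powSeq]

theorem sum_comps_succ {M : Type*} [AddCommMonoid M] (m : ℕ) (f : List ℕ → M) :
    ∑ α ∈ comps (m + 1), f α =
      ∑ k ∈ range (m + 1), ∑ α ∈ comps (m - k), f ((k + 1) :: α) := by
  rw [comps, sum_biUnion]
  · rw [← sum_range_reflect, ← sum_attach (range (m + 1))]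
    refine sum_congr rfl fun ⟨k, hk⟩ _ => ?_
    have hk : k < m + 1 := mem_range.mp hk
    rw [sum_image fun _ _ _ _ h => List.cons_injective h, Nat.add_sub_cancel,
      show m - (m - k) = k by omega, show m + 1 - k = m - k + 1 by omega]
  · intro k₁ _ k₂ _ hne
    refine disjoint_left.mpr fun α h₁ h₂ => hne ?_
    obtain ⟨β₁, -, rfl⟩ := mem_image.mp h₁
    obtain ⟨β₂, -, h⟩ := mem_image.mp h₂
    have h₁ := mem_range.mp k₁.2
    have h₂ := mem_range.mp k₂.2
    have hhead := (List.cons_eq_cons.mp h).1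
    exact Subtype.ext (by omega)

theorem sum_comps_milnorProd_succ (s m : ℕ) :
    ∑ α ∈ comps (m + 1), milnorProd s α = ∑ k ∈ range (m + 1),
      fmul (sElem (xiSeq s (k + 1))) (∑ α ∈ comps (m - k), milnorProd (s + (k + 1)) α) := by
  simp only [sum_comps_succ, milnorProd, fmul_sum]

theorem coarsSum_powSeq (n s : ℕ) : coarsSum (powSeq s n) = ∑ α ∈ comps n, milnorProd s α := by
  induction n using Nat.strong_induction_on generalizing s with
  | _ n ih =>
    match n with
    | 0 => simp [coarsSum, powSeq, coars, comps, milnorProd]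
    | m + 1 =>
      rw [coarsSum_powSeq_eq_sum_fmul s m.succ_pos, sum_comps_milnorProd_succ]
      refine sum_congr rfl fun k hk => ?_
      rw [Nat.succ_sub_succ, ih (m - k) (by omega)]

theorem milnor_conjugation_general (n : ℕ) :
    ∑ I' ∈ coars ((List.range n).map (2 ^ ·)), sElem I' =
      ∑ α ∈ comps n, milnorProd 0 α := by
  simpa only [coarsSum, powSeq, zero_add] using coarsSum_powSeq n 0

/-- Milnor's conjugation formula read in the mod 2 dual Leibniz--Hopf algebra:
for `n ≥ 1`,
`Σ_{I' ∈ C((2^0,…,2^{n−1}))} S_{I'}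
  = Σ_α Π_{k=1}^{l(α)} S_{(2^{σ(k)+α(k)−1},…,2^{σ(k)})}`,
where `α` runs over all compositions of `n` and `σ(k) = α(1)+⋯+α(k−1)`. -/
theorem milnor_conjugation (n : ℕ) (hn : 1 ≤ n) :
    ∑ I' ∈ coars ((List.range n).map (2 ^ ·)), sElem I' =
      ∑ α ∈ comps n, milnorProd 0 α :=
  milnor_conjugation_general n
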